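/- Let X_k, Y_k be integers with X_k + i ≡ 0 (mod A_i^[k]) and Y_k + j ≡ 0 (mod B_j^[k]) for all |i|, |j| ≤ k. Then for every pair (i,j) with max(1,|i|)·max(1,|j|) ≤ k, gcd(X_k + i, Y_k + j) > 1 (indeed the prime p_{i,j} divides both X_k + i and Y_k + j). -/

import Mathlib

/-- Ω_k as a finite set of lattice points. -/
noncomputable def OmegaF (k : ℕ) : Finset (ℤ × ℤ) :=
  (Finset.Icc (-(k : ℤ), -(k : ℤ)) ((k : ℤ), (k : ℤ))).filter
    (fun p => max 1 |p.1| * max 1 |p.2| ≤ (k : ℤ))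

/-- A_i^[k] = ∏_{s : (i,s) ∈ Ω_k} p_{i,s}. -/
noncomputable def A (k : ℕ) (p : ℤ × ℤ → ℕ) (i : ℤ) : ℕ :=
  ∏ s ∈ (Finset.Icc (-(k : ℤ)) (k : ℤ)).filter (fun s => max 1 |i| * max 1 |s| ≤ (k : ℤ)),
    p (i, s)

/-- B_j^[k] = ∏_{s : (s,j) ∈ Ω_k} p_{s,j}. -/
noncomputable def B (k : ℕ) (p : ℤ × ℤ → ℕ) (j : ℤ) : ℕ :=
  ∏ s ∈ (Finset.Icc (-(k : ℤ)) (k : ℤ)).filter (fun s => max 1 |s| * max 1 |j| ≤ (k : ℤ)),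
    p (s, j)

/-- P_k = ∏_{(i,j) ∈ Ω_k} p_{i,j}. -/
noncomputable def P (k : ℕ) (p : ℤ × ℤ → ℕ) : ℕ := ∏ q ∈ OmegaF k, p q

/-!
The prime `p (i, j)` is a factor of both `A k p i` and `B k p j`, so it divides `X + i` and
`Y + j`, hence their gcd. That gcd is not the junk value `Int.gcd 0 0 = 0`: if `X + i = 0`, then
for a neighbour `i' = i ± 1` in `[-k, k]` the number `A k p i'`, which has the prime factor
`p (i', 0)`, would divide `X + i' = ±1`.
-/

open Finset

section MaxOneMul

variable {α : Type*} [Ring α] [LinearOrder α] [IsOrderedRing α]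

lemma abs_le_of_max_one_mul_max_one_le {a b k : α} (h : max 1 |a| * max 1 |b| ≤ k) :
    |a| ≤ k :=
  calc |a| ≤ max 1 |a| := le_max_right _ _
    _ ≤ max 1 |a| * max 1 |b| :=
      le_mul_of_one_le_right (zero_le_one.trans (le_max_left _ _)) (le_max_left _ _)
    _ ≤ k := h

end MaxOneMul

section Erdos

variable {k : ℕ} {p : ℤ × ℤ → ℕ} {i j : ℤ}

lemma mem_OmegaF : (i, j) ∈ OmegaF k ↔ max 1 |i| * max 1 |j| ≤ k := by
  refine ⟨fun h => (mem_filter.1 h).2, fun h => mem_filter.2 ⟨?_, h⟩⟩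
  have hi := abs_le.1 (abs_le_of_max_one_mul_max_one_le h)
  have hj := abs_le.1 (abs_le_of_max_one_mul_max_one_le ((mul_comm _ _).trans_le h))
  simp only [mem_Icc, Prod.mk_le_mk]
  exact ⟨⟨hi.1, hj.1⟩, hi.2, hj.2⟩

lemma mem_Icc_of_mem_OmegaF (h : (i, j) ∈ OmegaF k) :
    i ∈ Icc (-(k : ℤ)) k ∧ j ∈ Icc (-(k : ℤ)) k := by
  have h := (mem_filter.1 h).1
  simp only [mem_Icc, Prod.mk_le_mk] at h ⊢
  exact ⟨⟨h.1.1, h.2.1⟩, h.1.2, h.2.2⟩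

lemma dvd_A_of_mem_OmegaF (h : (i, j) ∈ OmegaF k) : p (i, j) ∣ A k p i :=
  dvd_prod_of_mem _ (mem_filter.2 ⟨(mem_Icc_of_mem_OmegaF h).2, mem_OmegaF.1 h⟩)

lemma dvd_B_of_mem_OmegaF (h : (i, j) ∈ OmegaF k) : p (i, j) ∣ B k p j :=
  dvd_prod_of_mem _ (mem_filter.2 ⟨(mem_Icc_of_mem_OmegaF h).1, mem_OmegaF.1 h⟩)

lemma A_ne_one (hk : 1 ≤ k) (hprime : ∀ q ∈ OmegaF k, (p q).Prime)
    (hi : i ∈ Icc (-(k : ℤ)) k) : A k p i ≠ 1 := by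
  have hmem : (i, 0) ∈ OmegaF k := by
    rw [mem_OmegaF, abs_zero, max_eq_left zero_le_one, mul_one]
    exact max_le (by exact_mod_cast hk) (abs_le.2 (mem_Icc.1 hi))
  intro hA
  exact (hprime _ hmem).ne_one (Nat.dvd_one.1 (hA ▸ dvd_A_of_mem_OmegaF hmem))

lemma add_ne_zero_of_forall_A_dvd (hk : 1 ≤ k) (hprime : ∀ q ∈ OmegaF k, (p q).Prime)
    {X : ℤ} (hX : ∀ i ∈ Icc (-(k : ℤ)) k, (A k p i : ℤ) ∣ X + i) (hi : i ∈ Icc (-(k : ℤ)) k) :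
    X + i ≠ 0 := by
  intro h0
  obtain ⟨i', hi', hunit⟩ : ∃ i' ∈ Icc (-(k : ℤ)) k, (X + i').natAbs = 1 := by
    rw [mem_Icc] at hi
    rcases hi.2.lt_or_eq with hlt | heq
    · exact ⟨i + 1, mem_Icc.2 ⟨by omega, by omega⟩, by omega⟩
    · exact ⟨i - 1, mem_Icc.2 ⟨by omega, by omega⟩, by omega⟩
  have hdvd := Int.natCast_dvd.1 (hX i' hi')
  rw [hunit, Nat.dvd_one] at hdvd
  exact A_ne_one hk hprime hi' hdvd

end Erdos

theorem gcd_gt_one_general (k : ℕ) (hk : 1 ≤ k) (p : ℤ × ℤ → ℕ)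
    (hprime : ∀ q ∈ OmegaF k, (p q).Prime)
    (X Y : ℤ)
    (hX : ∀ i ∈ Finset.Icc (-(k : ℤ)) (k : ℤ), (A k p i : ℤ) ∣ X + i)
    (hY : ∀ j ∈ Finset.Icc (-(k : ℤ)) (k : ℤ), (B k p j : ℤ) ∣ Y + j) :
    ∀ i j : ℤ, max 1 |i| * max 1 |j| ≤ (k : ℤ) →
      ((p (i, j) : ℤ) ∣ X + i ∧ (p (i, j) : ℤ) ∣ Y + j) ∧
      1 < Int.gcd (X + i) (Y + j) := by
  intro i j hij
  have hmem : (i, j) ∈ OmegaF k := mem_OmegaF.2 hij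
  obtain ⟨hi, hj⟩ := mem_Icc_of_mem_OmegaF hmem
  have hXi : (p (i, j) : ℤ) ∣ X + i :=
    (Int.natCast_dvd_natCast.2 (dvd_A_of_mem_OmegaF hmem)).trans (hX i hi)
  have hYj : (p (i, j) : ℤ) ∣ Y + j :=
    (Int.natCast_dvd_natCast.2 (dvd_B_of_mem_OmegaF hmem)).trans (hY j hj)
  refine ⟨⟨hXi, hYj⟩, ?_⟩
  have hgcd : p (i, j) ∣ Int.gcd (X + i) (Y + j) :=
    Int.natCast_dvd_natCast.1 (Int.dvd_coe_gcd hXi hYj)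
  have hpos : 0 < Int.gcd (X + i) (Y + j) :=
    Int.gcd_pos_of_ne_zero_left _ (add_ne_zero_of_forall_A_dvd hk hprime hX hi)
  exact (hprime _ hmem).one_lt.trans_le (Nat.le_of_dvd hpos hgcd)

/-- If X_k + i ≡ 0 (mod A_i^[k]) and Y_k + j ≡ 0 (mod B_j^[k]) for all |i|,|j| ≤ k, then for
    every (i,j) with max(1,|i|)·max(1,|j|) ≤ k the prime p_{i,j} divides both X_k + i and
    Y_k + j, and in particular gcd(X_k + i, Y_k + j) > 1. -/
theorem gcd_gt_one (k : ℕ) (hk : 1 ≤ k) (p : ℤ × ℤ → ℕ)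
    (hprime : ∀ q ∈ OmegaF k, (p q).Prime)
    (hinj : Set.InjOn p (OmegaF k))
    (X Y : ℤ)
    (hX : ∀ i ∈ Finset.Icc (-(k : ℤ)) (k : ℤ), (A k p i : ℤ) ∣ X + i)
    (hY : ∀ j ∈ Finset.Icc (-(k : ℤ)) (k : ℤ), (B k p j : ℤ) ∣ Y + j) :
    ∀ i j : ℤ, max 1 |i| * max 1 |j| ≤ (k : ℤ) →
      ((p (i, j) : ℤ) ∣ X + i ∧ (p (i, j) : ℤ) ∣ Y + j) ∧
      1 < Int.gcd (X + i) (Y + j) :=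
  gcd_gt_one_general k hk p hprime X Y hX hY
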